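/- arXiv:2406.08064 — 2 statements merged into one kernel-verified Lean document; each statement's English description precedes it below -/
import Mathlib

section
/- Exponentially spaced partition bound: fix η > 0, a > 0, integers q ≥ 0, M ≥ 1, and suppose M ≥ e^{ηa/(q+2)} − 1. Define τ(κ) = −((q+2)/η) log(1 − (κ/M)(1 − e^{−ηa/(q+2)})) for κ = 0, 1, …, M, and δτ_κ = τ(κ) − τ(κ−1). Then for every κ ∈ {1, …, M}, δτ_κ · e^{−η τ(κ−1)/(q+2)} ≤ 2(q+2)(1 − e^{−ηa/(q+2)})/(Mη), and consequently δτ_κ^{q+2} e^{−η τ(κ−1)} ≤ (2a/M)^{q+2}. -/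
set_option maxHeartbeats 1000000 in
/-- Exponentially spaced partition bound. -/
theorem exponential_partition_bound (η a : ℝ) (hη : 0 < η) (ha : 0 < a)
    (q M : ℕ) (hM : 1 ≤ M)
    (hMbig : Real.exp (η * a / (q + 2)) - 1 ≤ (M : ℝ))
    (τ : ℕ → ℝ)
    (hτ : ∀ κ : ℕ, κ ≤ M →
      τ κ = -((q + 2) / η) *
        Real.log (1 - ((κ : ℝ) / M) * (1 - Real.exp (-η * a / (q + 2)))))
    (κ : ℕ) (hκ1 : 1 ≤ κ) (hκM : κ ≤ M) :
    (τ κ - τ (κ - 1)) * Real.exp (-η * τ (κ - 1) / (q + 2))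
        ≤ 2 * (q + 2) * (1 - Real.exp (-η * a / (q + 2))) / (M * η) ∧
      (τ κ - τ (κ - 1)) ^ (q + 2) * Real.exp (-η * τ (κ - 1))
        ≤ (2 * a / M) ^ (q + 2) := by
  have hq2 : (0:ℝ) < (q:ℝ) + 2 := by positivity
  have hM0 : (0:ℝ) < M := by exact_mod_cast Nat.lt_of_lt_of_le Nat.zero_lt_one hM
  set A := η * a / ((q:ℝ) + 2) with hA
  have hA0 : 0 < A := by positivity
  have hEpos : 0 < Real.exp (-A) := Real.exp_pos _
  have hE1 : Real.exp (-A) < 1 := by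
    rw [Real.exp_lt_one_iff]; linarith
  have hneg : -η * a / ((q:ℝ) + 2) = -A := by rw [hA]; ring
  set c := 1 - Real.exp (-A) with hc
  have hc0 : 0 < c := by rw [hc]; linarith
  have hc1 : c < 1 := by rw [hc]; linarith
  have hκR : (κ:ℝ) ≤ M := by exact_mod_cast hκM
  have hκ1R : (1:ℝ) ≤ κ := by exact_mod_cast hκ1
  have hk1cast : ((κ - 1 : ℕ) : ℝ) = (κ:ℝ) - 1 := by
    have := Nat.cast_sub (R := ℝ) hκ1
    simpa using this
  have hτκ : τ κ = -(((q:ℝ)+2)/η) * Real.log (1 - (κ:ℝ)/M * c) := by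
    rw [hτ κ hκM, hneg, ← hc]
  have hτκ1 : τ (κ-1) = -(((q:ℝ)+2)/η) * Real.log (1 - ((κ:ℝ)-1)/M * c) := by
    rw [hτ (κ-1) (le_trans (Nat.sub_le _ _) hκM), hneg, ← hc, hk1cast]
  set x := 1 - (κ:ℝ)/M * c with hx
  set y := 1 - ((κ:ℝ)-1)/M * c with hy
  -- positivity of x and y
  have hxE : Real.exp (-A) ≤ x := by
    have h1 : (κ:ℝ)/M ≤ 1 := by rw [div_le_one hM0]; exact hκR
    have h2 : (κ:ℝ)/M * c ≤ c := by nlinarith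
    rw [hx, hc]; linarith
  have hyE : Real.exp (-A) ≤ y := by
    have h1 : ((κ:ℝ)-1)/M ≤ 1 := by rw [div_le_one hM0]; linarith
    have h0 : (0:ℝ) ≤ ((κ:ℝ)-1)/M := div_nonneg (by linarith) hM0.le
    have h2 : ((κ:ℝ)-1)/M * c ≤ c := by nlinarith
    rw [hy, hc]; linarith
  have hx1 : 0 < x := lt_of_lt_of_le hEpos hxE
  have hy1 : 0 < y := lt_of_lt_of_le hEpos hyE
  have hyx : y = x + c/M := by rw [hx, hy]; field_simp; ring
  -- key: c/M ≤ x (uses hMbig)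
  have hexpA : Real.exp A * Real.exp (-A) = 1 := by
    rw [← Real.exp_add]; simp
  have hMc : ((M:ℝ)+1) * c ≤ M := by
    have h1 : Real.exp A ≤ (M:ℝ) + 1 := by linarith
    have h2 : 1 ≤ ((M:ℝ)+1) * Real.exp (-A) := by
      have h3 := mul_le_mul_of_nonneg_right h1 hEpos.le
      rw [hexpA] at h3; linarith
    rw [hc]; nlinarith [h2]
  have hcx : c/M ≤ x := by
    have h5 : (κ:ℝ)*c + c ≤ M := by
      have h8 : (κ:ℝ)*c ≤ (M:ℝ)*c := mul_le_mul_of_nonneg_right hκR hc0.le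
      nlinarith [h8, hMc]
    have h6 : c/M + (κ:ℝ)/M*c ≤ 1 := by
      have h7 : c/M + (κ:ℝ)/M*c = ((κ:ℝ)*c + c)/M := by ring
      rw [h7, div_le_one hM0]; exact h5
    rw [hx]; linarith
  -- log difference
  have hld0 : 0 ≤ Real.log y - Real.log x := by
    have : x ≤ y := by
      have h9 : 0 < c/(M:ℝ) := div_pos hc0 hM0
      rw [hyx]; linarith
    have := Real.log_le_log hx1 this
    linarith
  have hlog : Real.log y - Real.log x ≤ (c/M)/x := by
    have h1 : Real.log (y/x) ≤ y/x - 1 := Real.log_le_sub_one_of_pos (by positivity)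
    rw [Real.log_div (ne_of_gt hy1) (ne_of_gt hx1)] at h1
    have h2 : y/x - 1 = (c/M)/x := by
      rw [hyx]; field_simp; ring
    linarith [h2 ▸ h1]
  -- product formula
  have hP : (τ κ - τ (κ-1)) * Real.exp (-η * τ (κ-1) / ((q:ℝ)+2))
      = ((q:ℝ)+2)/η * (Real.log y - Real.log x) * y := by
    rw [hτκ, hτκ1]
    have hexpy : Real.exp (-η * (-(((q:ℝ)+2)/η) * Real.log y) / ((q:ℝ)+2)) = y := by
      rw [show -η * (-(((q:ℝ)+2)/η) * Real.log y) / ((q:ℝ)+2) = Real.log y by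
        field_simp]
      exact Real.exp_log hy1
    rw [hexpy]; ring
  -- main bound, part 1
  have key1 : ((q:ℝ)+2)/η * (Real.log y - Real.log x) * y ≤ 2*((q:ℝ)+2)*c/(M*η) := by
    have h2x : y ≤ 2*x := by rw [hyx]; linarith
    have hb : (Real.log y - Real.log x) * y ≤ (c/M)/x * (2*x) :=
      mul_le_mul hlog h2x (le_of_lt hy1) (by positivity)
    have hval : (c/M)/x * (2*x) = 2*c/M := by field_simp
    calc ((q:ℝ)+2)/η * (Real.log y - Real.log x) * y
        = ((q:ℝ)+2)/η * ((Real.log y - Real.log x) * y) := by ring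
      _ ≤ ((q:ℝ)+2)/η * (2*c/M) := by
          apply mul_le_mul_of_nonneg_left _ (by positivity)
          rw [← hval]; exact hb
      _ = 2*((q:ℝ)+2)*c/(M*η) := by field_simp
  have key1' : (τ κ - τ (κ-1)) * Real.exp (-η * τ (κ-1) / ((q:ℝ)+2))
      ≤ 2*((q:ℝ)+2)*c/(M*η) := by rw [hP]; exact key1
  have hP0 : 0 ≤ (τ κ - τ (κ-1)) * Real.exp (-η * τ (κ-1) / ((q:ℝ)+2)) := by
    rw [hP]
    exact mul_nonneg (mul_nonneg (by positivity) hld0) (le_of_lt hy1)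
  -- power identity
  have hpow : (τ κ - τ (κ-1)) ^ (q+2) * Real.exp (-η * τ (κ-1))
      = ((τ κ - τ (κ-1)) * Real.exp (-η * τ (κ-1) / ((q:ℝ)+2))) ^ (q+2) := by
    rw [mul_pow, ← Real.exp_nat_mul]
    congr 1
    push_cast
    field_simp
  -- bound on the constant
  have hbound2 : 2*((q:ℝ)+2)*c/(M*η) ≤ 2*a/M := by
    have hcA : c ≤ A := by
      have := Real.add_one_le_exp (-A)
      rw [hc]; linarith
    rw [div_le_div_iff₀ (by positivity) (by positivity)]
    have h1 : ((q:ℝ)+2) * c ≤ η * a := by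
      have h2 : ((q:ℝ)+2) * A = η * a := by rw [hA]; field_simp
      nlinarith
    nlinarith
  constructor
  · rw [hneg, ← hc]
    exact key1'
  · rw [hpow]
    calc ((τ κ - τ (κ-1)) * Real.exp (-η * τ (κ-1) / ((q:ℝ)+2))) ^ (q+2)
        ≤ (2*((q:ℝ)+2)*c/(M*η)) ^ (q+2) := pow_le_pow_left₀ hP0 key1' _
      _ ≤ (2*a/(M:ℝ)) ^ (q+2) := pow_le_pow_left₀ (by positivity) hbound2 _
end

section
/- Vector-norm error bound for the regularised truncated gauge potential acting on an eigenstate: let H be hermitian with orthonormal eigenbasis {|m⟩} and eigenvalues {E_m}, let B be hermitian, and fix an index n such that |E_m − E_n| ≥ Δ > 0 for all m ≠ n. Define A|coefficients by ⟨m|A|n⟩ = ⟨m|B|n⟩/(i(E_m − E_n)) for m ≠ n and ⟨n|A|n⟩ = 0, and define A_{η,a} = (1/2)∫_{−a}^{a} e^{−η|τ|} sgn(τ) e^{−iHτ} B e^{iHτ} dτ. Then ‖(A − A_{η,a})|n⟩‖ ≤ ‖B‖ · (η²/Δ³ + e^{−ηa}(1/Δ + 1/η)). -/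
/-!
In the eigenbasis of `H` the Heisenberg evolution `e^{-iHτ} B e^{iHτ}` multiplies `⟨m|B|n⟩` by
`e^{-iωτ}`, `ω = E_m - E_n`. Hence `(A - A_{η,a})|n⟩` has coefficients
`⟨m|B|n⟩ ((iω)⁻¹ - K(ω)/2)`, where `K` is the Fourier transform of the damped sign window
`e^{-η|τ|} sgn τ` on `[-a, a]`, and the diagonal coefficient vanishes because `K(0) = 0`.
Integrating `e^{-(η ± iω)τ}` explicitly, `(iω)⁻¹ - K(ω)/2` is the damping bias
`-iη²/(ω(η² + ω²))`, of size at most `η²/|ω|³`, plus the truncation tails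
`e^{-(η ± iω)a}/(2(η ± iω))`, each of size at most `e^{-ηa}/(2η)`. Since `|ω| ≥ Δ` off the
diagonal, Parseval turns this coefficientwise bound into
`‖(A - A_{η,a})|n⟩‖ ≤ (η²/Δ³ + e^{-ηa}/η) ‖B|n⟩‖`.
-/

open scoped InnerProductSpace

open Complex (I)

theorem NormedSpace.exp_apply_of_eq_smul {E : Type*} [NormedAddCommGroup E] [NormedSpace ℂ E]
    [CompleteSpace E] {T : E →L[ℂ] E} {v : E} {μ : ℂ} (h : T v = μ • v) :
    NormedSpace.exp T v = Complex.exp μ • v := by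
  have hpow : ∀ k : ℕ, (T ^ k) v = μ ^ k • v := by
    intro k
    induction k with
    | zero => simp
    | succ k ih => rw [pow_succ, mul_apply_eq_comp, h, map_smul, ih, smul_smul, ← pow_succ']
  have hT := ((NormedSpace.exp_series_hasSum_exp' (𝕂 := ℂ) T).mapL
    (ContinuousLinearMap.apply ℂ E v))
  have hμ := (NormedSpace.exp_series_hasSum_exp' (𝕂 := ℂ) μ).smul_const v
  rw [← Complex.exp_eq_exp_ℂ] at hμ
  refine hT.unique ?_
  simpa [hpow, smul_smul] using hμ

theorem IsSelfAdjoint.inner_exp_mul_mul_exp_apply {E : Type*} [NormedAddCommGroup E]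
    [InnerProductSpace ℂ E] [CompleteSpace E] {H : E →L[ℂ] E} (hH : IsSelfAdjoint H)
    (B : E →L[ℂ] E) {u v : E} {μ ν : ℝ} (hu : H u = (μ : ℂ) • u) (hv : H v = (ν : ℂ) • v)
    (τ : ℝ) :
    ⟪u, (NormedSpace.exp ((-(τ : ℂ) * I) • H) * B * NormedSpace.exp (((τ : ℂ) * I) • H)) v⟫_ℂ
      = Complex.exp (-((μ - ν : ℝ) : ℂ) * I * τ) * ⟪u, B v⟫_ℂ := by
  have hexp : ∀ (c : ℂ) {w : E} {κ : ℝ}, H w = (κ : ℂ) • w →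
      NormedSpace.exp (c • H) w = Complex.exp (c * κ) • w := fun c w κ hw =>
    NormedSpace.exp_apply_of_eq_smul (by rw [smul_apply, hw, smul_smul])
  have hadj : ContinuousLinearMap.adjoint (NormedSpace.exp ((-(τ : ℂ) * I) • H))
      = NormedSpace.exp (((τ : ℂ) * I) • H) := by
    rw [← ContinuousLinearMap.star_eq_adjoint, NormedSpace.star_exp, star_smul, hH.star_eq]
    simp [Complex.conj_ofReal]
  rw [mul_apply_eq_comp, mul_apply_eq_comp, hexp _ hv, map_smul,
    ← ContinuousLinearMap.adjoint_inner_left, hadj, hexp _ hu, inner_smul_left, inner_smul_right,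
    ← Complex.exp_conj, ← mul_assoc, ← Complex.exp_add]
  congr 2
  simp [Complex.conj_ofReal]
  ring

theorem continuous_exp_smul_mul_mul_exp_smul {A : Type*} [NormedRing A] [NormedAlgebra ℂ A]
    [CompleteSpace A] (H B : A) :
    Continuous fun τ : ℝ =>
      NormedSpace.exp ((-(τ : ℂ) * I) • H) * B * NormedSpace.exp (((τ : ℂ) * I) • H) := by
  have hexp : Continuous (NormedSpace.exp : A → A) := by
    rw [← continuousOn_univ, ← Metric.eball_top_eq_univ 0,
      ← NormedSpace.expSeries_radius_eq_top ℂ A]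
    exact NormedSpace.continuousOn_exp
  fun_prop

theorem IsSelfAdjoint.inner_integral_smul_exp_mul_mul_exp_apply {E : Type*} [NormedAddCommGroup E]
    [InnerProductSpace ℂ E] [CompleteSpace E] {H : E →L[ℂ] E} (hH : IsSelfAdjoint H)
    (B : E →L[ℂ] E) {u v : E} {μ ν : ℝ} (hu : H u = (μ : ℂ) • u) (hv : H v = (ν : ℂ) • v)
    {w : ℝ → ℂ} {a b : ℝ} (hw : IntervalIntegrable w MeasureTheory.volume a b) :
    ⟪u, (∫ τ in a..b, w τ •
        (NormedSpace.exp ((-(τ : ℂ) * I) • H) * B * NormedSpace.exp (((τ : ℂ) * I) • H))) v⟫_ℂ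
      = (∫ τ in a..b, w τ * Complex.exp (-((μ - ν : ℝ) : ℂ) * I * τ)) * ⟪u, B v⟫_ℂ := by
  let L : (E →L[ℂ] E) →L[ℂ] ℂ := (innerSL ℂ u).comp (ContinuousLinearMap.apply ℂ E v)
  have hint := hw.smul_continuousOn (continuous_exp_smul_mul_mul_exp_smul H B).continuousOn
  refine (L.intervalIntegral_comp_comm hint).symm.trans ?_
  rw [← intervalIntegral.integral_mul_const]
  refine intervalIntegral.integral_congr fun τ _ => ?_
  simp only [L, ContinuousLinearMap.comp_apply, ContinuousLinearMap.apply_apply,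
    innerSL_apply_apply, smul_apply, inner_smul_right, hH.inner_exp_mul_mul_exp_apply B hu hv]
  ring

noncomputable def dampedSign (η τ : ℝ) : ℝ := Real.exp (-η * |τ|) * Real.sign τ

noncomputable def dampedSignTransform (η a ω : ℝ) : ℂ :=
  ∫ τ in (-a)..a, (dampedSign η τ : ℂ) * Complex.exp (-(ω : ℂ) * I * τ)

theorem intervalIntegrable_ofReal_dampedSign (η a b : ℝ) :
    IntervalIntegrable (fun τ => (dampedSign η τ : ℂ)) MeasureTheory.volume a b := by
  have hsign : IntervalIntegrable Real.sign MeasureTheory.volume a b := by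
    rw [intervalIntegrable_iff]
    refine MeasureTheory.Measure.integrableOn_of_bounded (M := 1) measure_Ioc_lt_top.ne
      (Measurable.ite measurableSet_Iio measurable_const
        (Measurable.ite measurableSet_Ioi measurable_const measurable_const)).aestronglyMeasurable
      (Filter.Eventually.of_forall fun τ => ?_)
    rcases Real.sign_apply_eq τ with h | h | h <;> simp [h]
  have h : IntervalIntegrable (dampedSign η) MeasureTheory.volume a b :=
    hsign.continuousOn_mul (by fun_prop)
  exact ⟨h.1.ofReal, h.2.ofReal⟩

theorem dampedSign_of_pos {η τ : ℝ} (hτ : 0 < τ) : dampedSign η τ = Real.exp (-η * τ) := by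
  rw [dampedSign, abs_of_pos hτ, Real.sign_of_pos hτ, mul_one]

theorem dampedSign_neg (η τ : ℝ) : dampedSign η (-τ) = -dampedSign η τ := by
  rw [dampedSign, dampedSign, abs_neg, Real.sign_neg, mul_neg]

theorem dampedSignTransform_eq {η : ℝ} (hη : η ≠ 0) {a : ℝ} (ha : 0 ≤ a) (ω : ℝ) :
    dampedSignTransform η a ω
      = (1 - Complex.exp (-(η + ω * I) * a)) / (η + ω * I)
        - (1 - Complex.exp (-(η - ω * I) * a)) / (η - ω * I) := by
  have hp : (η + ω * I : ℂ) ≠ 0 := fun h => hη (by simpa using congrArg Complex.re h)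
  have hq : (η - ω * I : ℂ) ≠ 0 := fun h => hη (by simpa using congrArg Complex.re h)
  have hint : ∀ x y : ℝ, IntervalIntegrable
      (fun τ : ℝ => (dampedSign η τ : ℂ) * Complex.exp (-(ω : ℂ) * I * τ))
      MeasureTheory.volume x y :=
    fun x y => (intervalIntegrable_ofReal_dampedSign η x y).mul_continuousOn (by fun_prop)
  -- on `(0, a]` the window is `exp (-η τ)`, and the negative half is reflected onto it
  have hpos : ∀ s : ℂ, (∫ τ in (0)..a, (dampedSign η τ : ℂ) * Complex.exp (-(ω : ℂ) * s * τ))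
      = ∫ τ in (0)..a, Complex.exp (-(η + ω * s) * τ) := by
    intro s
    refine intervalIntegral.integral_congr_ae (Filter.Eventually.of_forall fun τ hτ => ?_)
    rw [Set.uIoc_of_le ha] at hτ
    rw [dampedSign_of_pos hτ.1, Complex.ofReal_exp, ← Complex.exp_add]
    congr 1
    push_cast
    ring
  rw [dampedSignTransform, ← intervalIntegral.integral_add_adjacent_intervals (hint _ 0) (hint 0 _),
    ← neg_zero, ← intervalIntegral.integral_comp_neg, neg_zero]
  have hneg : (∫ τ in (0)..a, (dampedSign η (-τ) : ℂ) * Complex.exp (-(ω : ℂ) * I * ↑(-τ)))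
      = -∫ τ in (0)..a, (dampedSign η τ : ℂ) * Complex.exp (-(ω : ℂ) * -I * τ) := by
    rw [← intervalIntegral.integral_neg]
    congr 1 with τ
    rw [dampedSign_neg]
    push_cast
    ring_nf
  rw [hneg, hpos, hpos, mul_neg, ← sub_eq_add_neg, integral_exp_mul_complex (neg_ne_zero.2 hp),
    integral_exp_mul_complex (neg_ne_zero.2 hq)]
  simp only [Complex.ofReal_zero, mul_zero, Complex.exp_zero]
  field_simp
  ring

theorem dampedSignTransform_zero (η a : ℝ) : dampedSignTransform η a 0 = 0 := by
  have h := intervalIntegral.integral_comp_neg (fun τ => (dampedSign η τ : ℂ)) (a := -a) (b := a)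
  simp only [dampedSign_neg, Complex.ofReal_neg, intervalIntegral.integral_neg, neg_neg] at h
  simpa [dampedSignTransform] using self_eq_neg.mp h.symm

theorem Complex.norm_exp_neg_mul_div_le {z : ℂ} (hz : 0 < z.re) (a : ℝ) :
    ‖Complex.exp (-z * a) / z‖ ≤ Real.exp (-z.re * a) / z.re := by
  rw [norm_div, Complex.norm_exp]
  have hre : (-z * a).re = -z.re * a := by simp
  rw [hre]
  exact div_le_div_of_nonneg_left (Real.exp_nonneg _) hz (Complex.re_le_norm z)

theorem inv_I_mul_sub_half_dampedSignTransform_eq {η a ω : ℝ} (hη : η ≠ 0) (ha : 0 ≤ a)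
    (hω : ω ≠ 0) :
    (I * ω)⁻¹ - dampedSignTransform η a ω / 2
      = -I * η ^ 2 / (ω * (η ^ 2 + ω ^ 2))
        + (Complex.exp (-(η + ω * I) * a) / (η + ω * I)
          - Complex.exp (-(η - ω * I) * a) / (η - ω * I)) / 2 := by
  have hp : (η + ω * I : ℂ) ≠ 0 := fun h => hη (by simpa using congrArg Complex.re h)
  have hq : (η - ω * I : ℂ) ≠ 0 := fun h => hη (by simpa using congrArg Complex.re h)
  have hs : (η ^ 2 + ω ^ 2 : ℂ) ≠ 0 := by exact_mod_cast (by positivity : (η ^ 2 + ω ^ 2 : ℝ) ≠ 0)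
  have hω' : (ω : ℂ) ≠ 0 := by exact_mod_cast hω
  have hpq : (η + ω * I) * (η - ω * I) = (η ^ 2 + ω ^ 2 : ℂ) := by
    linear_combination (-(ω : ℂ) ^ 2) * Complex.I_sq
  have key : 1 / (η + ω * I) - 1 / (η - ω * I) = -2 * ω * I / (η ^ 2 + ω ^ 2 : ℂ) := by
    rw [div_sub_div _ _ hp hq, hpq]
    ring
  rw [dampedSignTransform_eq hη ha]
  generalize Complex.exp (-(η + ω * I) * a) = X
  generalize Complex.exp (-(η - ω * I) * a) = Y
  calc (I * ω)⁻¹ - ((1 - X) / (η + ω * I) - (1 - Y) / (η - ω * I)) / 2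
      = (I * ω)⁻¹ - (1 / (η + ω * I) - 1 / (η - ω * I)) / 2
        + (X / (η + ω * I) - Y / (η - ω * I)) / 2 := by ring
    _ = _ := by
      rw [key, mul_inv, Complex.inv_I]
      field_simp
      ring

theorem norm_inv_I_mul_sub_half_dampedSignTransform_le {η a ω : ℝ} (hη : 0 < η) (ha : 0 ≤ a)
    (hω : ω ≠ 0) :
    ‖(I * ω)⁻¹ - dampedSignTransform η a ω / 2‖ ≤ η ^ 2 / |ω| ^ 3 + Real.exp (-η * a) / η := by
  rw [inv_I_mul_sub_half_dampedSignTransform_eq hη.ne' ha hω]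
  have hmain : ‖-I * η ^ 2 / (ω * (η ^ 2 + ω ^ 2))‖ ≤ η ^ 2 / |ω| ^ 3 := by
    have hcast : -I * η ^ 2 / (ω * (η ^ 2 + ω ^ 2))
        = -I * ((η ^ 2 / (ω * (η ^ 2 + ω ^ 2)) : ℝ) : ℂ) := by
      push_cast
      ring
    rw [hcast, norm_mul, norm_neg, Complex.norm_I, one_mul, Complex.norm_real, Real.norm_eq_abs,
      abs_div, abs_mul, abs_of_nonneg (by positivity : 0 ≤ η ^ 2),
      abs_of_nonneg (by positivity : 0 ≤ η ^ 2 + ω ^ 2)]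
    have hcube : |ω| ^ 3 = |ω| * ω ^ 2 := by rw [pow_succ', sq_abs]
    rw [hcube]
    gcongr
    linarith [sq_nonneg η]
  have htail : ∀ z : ℂ, z.re = η → ‖Complex.exp (-z * a) / z‖ ≤ Real.exp (-η * a) / η :=
    fun z hz => hz ▸ Complex.norm_exp_neg_mul_div_le (hz ▸ hη) a
  calc _ ≤ ‖-I * η ^ 2 / (ω * (η ^ 2 + ω ^ 2))‖
        + ‖(Complex.exp (-(η + ω * I) * a) / (η + ω * I)
          - Complex.exp (-(η - ω * I) * a) / (η - ω * I)) / 2‖ := norm_add_le _ _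
    _ ≤ η ^ 2 / |ω| ^ 3 + (Real.exp (-η * a) / η + Real.exp (-η * a) / η) / 2 := by
        refine add_le_add hmain ?_
        rw [norm_div, Complex.norm_two]
        refine div_le_div_of_nonneg_right ((norm_sub_le _ _).trans ?_) two_pos.le
        exact add_le_add (htail _ (by simp)) (htail _ (by simp))
    _ = η ^ 2 / |ω| ^ 3 + Real.exp (-η * a) / η := by ring

theorem norm_inv_I_mul_sub_half_dampedSignTransform_le_of_le {η a ω Δ : ℝ} (hη : 0 < η)
    (ha : 0 ≤ a) (hΔ : 0 < Δ) (hω : Δ ≤ |ω|) :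
    ‖(I * ω)⁻¹ - dampedSignTransform η a ω / 2‖
      ≤ η ^ 2 / Δ ^ 3 + Real.exp (-η * a) * (1 / Δ + 1 / η) := by
  have hω₀ : ω ≠ 0 := abs_pos.mp (hΔ.trans_le hω)
  have hcube : η ^ 2 / |ω| ^ 3 ≤ η ^ 2 / Δ ^ 3 := by gcongr
  have htail : Real.exp (-η * a) / η ≤ Real.exp (-η * a) * (1 / Δ + 1 / η) := by
    rw [mul_add, mul_one_div, mul_one_div]
    linarith [(by positivity : 0 ≤ Real.exp (-η * a) / Δ)]
  exact (norm_inv_I_mul_sub_half_dampedSignTransform_le hη ha hω₀).trans (add_le_add hcube htail)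

theorem OrthonormalBasis.norm_le_of_forall_norm_inner_le {ι 𝕜 E : Type*} [Fintype ι] [RCLike 𝕜]
    [NormedAddCommGroup E] [InnerProductSpace 𝕜 E] (b : OrthonormalBasis ι 𝕜 E) {x y : E}
    {c : ℝ} (hc : 0 ≤ c) (h : ∀ i, ‖⟪b i, x⟫_𝕜‖ ≤ c * ‖⟪b i, y⟫_𝕜‖) : ‖x‖ ≤ c * ‖y‖ := by
  refine le_of_sq_le_sq ?_ (by positivity)
  calc ‖x‖ ^ 2 = ∑ i, ‖⟪b i, x⟫_𝕜‖ ^ 2 := (b.sum_sq_norm_inner_right x).symm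
    _ ≤ ∑ i, (c * ‖⟪b i, y⟫_𝕜‖) ^ 2 := by gcongr with i; exact h i
    _ = (c * ‖y‖) ^ 2 := by simp only [mul_pow, ← Finset.mul_sum, b.sum_sq_norm_inner_right]

theorem AGP_error_on_eigenstate_general {d : ℕ}
    (H B A : EuclideanSpace ℂ (Fin d) →L[ℂ] EuclideanSpace ℂ (Fin d))
    (hH : IsSelfAdjoint H)
    (e : OrthonormalBasis (Fin d) ℂ (EuclideanSpace ℂ (Fin d)))
    (Ev : Fin d → ℝ) (heig : ∀ k, H (e k) = (Ev k : ℂ) • e k)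
    (n : Fin d) (Δ : ℝ) (hΔ : 0 < Δ)
    (hgap : ∀ m, m ≠ n → Δ ≤ |Ev m - Ev n|)
    (η a : ℝ) (hη : 0 < η) (ha : 0 < a)
    (hAoff : ∀ m, m ≠ n →
      ⟪e m, A (e n)⟫_ℂ = ⟪e m, B (e n)⟫_ℂ / (Complex.I * ((Ev m : ℂ) - (Ev n : ℂ))))
    (hAdiag : ⟪e n, A (e n)⟫_ℂ = 0) :
    ‖(A - (1 / 2 : ℂ) • ∫ τ in (-a)..a,
          ((Real.exp (-η * |τ|) * Real.sign τ : ℝ) : ℂ) •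
            (NormedSpace.exp ((-(τ : ℂ) * Complex.I) • H) * B *
              NormedSpace.exp (((τ : ℂ) * Complex.I) • H))) (e n)‖
      ≤ ‖B‖ * (η ^ 2 / Δ ^ 3 + Real.exp (-η * a) * (1 / Δ + 1 / η)) := by
  set g := η ^ 2 / Δ ^ 3 + Real.exp (-η * a) * (1 / Δ + 1 / η)
  set Aηa := (1 / 2 : ℂ) • ∫ τ in (-a)..a, (dampedSign η τ : ℂ) •
    (NormedSpace.exp ((-(τ : ℂ) * Complex.I) • H) * B * NormedSpace.exp (((τ : ℂ) * Complex.I) • H))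
  have hcoef : ∀ m, ⟪e m, Aηa (e n)⟫_ℂ
      = dampedSignTransform η a (Ev m - Ev n) / 2 * ⟪e m, B (e n)⟫_ℂ := by
    intro m
    rw [smul_apply, inner_smul_right, hH.inner_integral_smul_exp_mul_mul_exp_apply B (heig m)
      (heig n) (intervalIntegrable_ofReal_dampedSign η _ _), dampedSignTransform]
    ring
  have hbound : ∀ m, ‖⟪e m, (A - Aηa) (e n)⟫_ℂ‖ ≤ g * ‖⟪e m, B (e n)⟫_ℂ‖ := by
    intro m
    rw [sub_apply, inner_sub_right, hcoef]
    rcases eq_or_ne m n with rfl | hm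
    · rw [hAdiag, sub_self, dampedSignTransform_zero, zero_div, zero_mul, sub_zero, norm_zero]
      positivity
    calc _ = ‖(I * ((Ev m - Ev n : ℝ) : ℂ))⁻¹ - dampedSignTransform η a (Ev m - Ev n) / 2‖
          * ‖⟪e m, B (e n)⟫_ℂ‖ := by
          rw [hAoff m hm, ← norm_mul]
          congr 1
          push_cast
          ring
      _ ≤ g * ‖⟪e m, B (e n)⟫_ℂ‖ := by
          gcongr
          exact norm_inv_I_mul_sub_half_dampedSignTransform_le_of_le hη ha.le hΔ (hgap m hm)
  calc ‖(A - Aηa) (e n)‖ ≤ g * ‖B (e n)‖ := e.norm_le_of_forall_norm_inner_le (by positivity) hbound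
    _ ≤ ‖B‖ * g := by
        rw [mul_comm]
        gcongr
        simpa using B.le_opNorm (e n)

/-- Vector-norm error bound for the regularised truncated gauge potential acting
on the eigenstate `|n⟩`: `‖(A − A_{η,a})|n⟩‖ ≤ ‖B‖ (η²/Δ³ + e^{−ηa}(1/Δ + 1/η))`. -/
theorem AGP_error_on_eigenstate {d : ℕ}
    (H B A : EuclideanSpace ℂ (Fin d) →L[ℂ] EuclideanSpace ℂ (Fin d))
    (hH : IsSelfAdjoint H) (hB : IsSelfAdjoint B)
    (e : OrthonormalBasis (Fin d) ℂ (EuclideanSpace ℂ (Fin d)))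
    (Ev : Fin d → ℝ) (heig : ∀ k, H (e k) = (Ev k : ℂ) • e k)
    (n : Fin d) (Δ : ℝ) (hΔ : 0 < Δ)
    (hgap : ∀ m, m ≠ n → Δ ≤ |Ev m - Ev n|)
    (η a : ℝ) (hη : 0 < η) (ha : 0 < a)
    (hAoff : ∀ m, m ≠ n →
      ⟪e m, A (e n)⟫_ℂ = ⟪e m, B (e n)⟫_ℂ / (Complex.I * ((Ev m : ℂ) - (Ev n : ℂ))))
    (hAdiag : ⟪e n, A (e n)⟫_ℂ = 0) :
    ‖(A - (1 / 2 : ℂ) • ∫ τ in (-a)..a,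
          ((Real.exp (-η * |τ|) * Real.sign τ : ℝ) : ℂ) •
            (NormedSpace.exp ((-(τ : ℂ) * Complex.I) • H) * B *
              NormedSpace.exp (((τ : ℂ) * Complex.I) • H))) (e n)‖
      ≤ ‖B‖ * (η ^ 2 / Δ ^ 3 + Real.exp (-η * a) * (1 / Δ + 1 / η)) :=
  AGP_error_on_eigenstate_general H B A hH e Ev heig n Δ hΔ hgap η a hη ha hAoff hAdiag
end
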